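/- arXiv:0901.3749 — 3 statements merged into one kernel-verified Lean document; each statement's English description precedes it below -/
import Mathlib

section
/- Let d ≥ 1 and let p₁, p₂ : Σ* → ℝ be GUSSFs with dim p₁ ≤ d and dim p₂ ≤ d. If p₁(v) = p₂(v) for every string v with |v| = 2d−1, then p₁ = p₂. In other words, a GUSSF of dimension at most d is uniquely determined by its values on strings of length exactly 2d−1. -/
/-- The column `p^w` of the Hankel matrix of `p`, as a function `v ↦ p(wv)`. -/
def hankelCol {A : Type*} (p : List A → ℝ) (w : List A) : List A → ℝ :=
  fun v => p (w ++ v)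

/-- The dimension of a string function: the rank of its Hankel matrix. -/
noncomputable def sfDim {A : Type*} (p : List A → ℝ) : Cardinal :=
  Module.rank ℝ ↥(Submodule.span ℝ (Set.range (hankelCol p)))

/-!
Put `q = p₁ - p₂`. Summing over the last letter, `q` vanishes on all strings of length
`< 2d`, and its Hankel matrix has rank at most `2d`. Inside the column space `W` of `q`,
consider the decreasing chain of subspaces `Z k` of functions vanishing on strings of length
`< k`. Since `W` is stable under the left shifts `f ↦ f (a :: ·)`, once `Z k = Z (k + 1)` the
chain is constant from `k` on; each strict step lowers the dimension, so as `dim W ≤ 2d` this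
happens for some `k ≤ 2d`. Then `q ∈ Z (2d) ⊆ Z k` lies in every `Z m`, so `q = 0`.
-/

theorem Submodule.exists_le_finrank_eq_succ_of_antitone {K V : Type*} [DivisionRing K]
    [AddCommGroup V] [Module K V] {Z : ℕ → Submodule K V} [FiniteDimensional K (Z 0)]
    (hZ : Antitone Z) :
    ∃ k ≤ Module.finrank K (Z 0), Z k = Z (k + 1) := by
  set r := Module.finrank K (Z 0)
  by_contra! hne
  have hdrop : ∀ k ≤ r + 1, Module.finrank K (Z k) + k ≤ r := by
    intro k
    induction k with
    | zero => intro _; simp [r]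
    | succ k ih =>
      intro hk
      have : FiniteDimensional K (Z k) := Submodule.finiteDimensional_of_le (hZ k.zero_le)
      have hlt : Z (k + 1) < Z k := lt_of_le_of_ne (hZ k.le_succ) (hne k (by omega)).symm
      have hrank := Submodule.finrank_lt_finrank_of_lt hlt
      have hprev := ih (by omega)
      omega
  have hlast := hdrop (r + 1) le_rfl
  omega

theorem eq_of_le_of_eq_succ {α : Type*} {Z : ℕ → α}
    (hstep : ∀ k, Z k = Z (k + 1) → Z (k + 1) = Z (k + 2)) {k : ℕ} (hk : Z k = Z (k + 1)) :
    ∀ m, k ≤ m → Z m = Z k := by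
  have hsucc : ∀ m, k ≤ m → Z m = Z (m + 1) := fun m hkm => by
    induction m, hkm using Nat.le_induction with
    | base => exact hk
    | succ m _ ih => exact hstep m ih
  intro m hkm
  induction m, hkm using Nat.le_induction with
  | base => rfl
  | succ m hkm ih => rw [← hsucc m hkm, ih]

namespace StringFunction

variable {A : Type*}

def vanishBelow (A : Type*) (k : ℕ) : Submodule ℝ (List A → ℝ) where
  carrier := {f | ∀ v : List A, v.length < k → f v = 0}
  add_mem' hf hg v hv := by simp [hf v hv, hg v hv]
  zero_mem' _ _ := rfl
  smul_mem' c f hf v hv := by simp [hf v hv]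

theorem vanishBelow_antitone : Antitone (vanishBelow A) :=
  fun _ _ hjk _ hf v hv => hf v (lt_of_lt_of_le hv hjk)

theorem funLeft_cons_hankelCol (p : List A → ℝ) (w : List A) (a : A) :
    LinearMap.funLeft ℝ ℝ (List.cons a) (hankelCol p w) = hankelCol p (w ++ [a]) := by
  funext v
  simp [LinearMap.funLeft_apply, hankelCol]

theorem funLeft_cons_mem_span_hankelCol {p f : List A → ℝ} (a : A)
    (hf : f ∈ Submodule.span ℝ (Set.range (hankelCol p))) :
    LinearMap.funLeft ℝ ℝ (List.cons a) f ∈ Submodule.span ℝ (Set.range (hankelCol p)) := by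
  refine (Submodule.map_span_le _ _ _).2 ?_ ⟨f, hf, rfl⟩
  rintro _ ⟨w, rfl⟩
  rw [funLeft_cons_hankelCol]
  exact Submodule.subset_span ⟨w ++ [a], rfl⟩

theorem self_mem_span_hankelCol (p : List A → ℝ) :
    p ∈ Submodule.span ℝ (Set.range (hankelCol p)) :=
  Submodule.subset_span ⟨[], rfl⟩

theorem sfDim_sub_le (p₁ p₂ : List A → ℝ) : sfDim (p₁ - p₂) ≤ sfDim p₁ + sfDim p₂ := by
  set S₁ := Submodule.span ℝ (Set.range (hankelCol p₁))
  set S₂ := Submodule.span ℝ (Set.range (hankelCol p₂))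
  have hle : Submodule.span ℝ (Set.range (hankelCol (p₁ - p₂))) ≤ S₁ ⊔ S₂ := by
    refine Submodule.span_le.2 ?_
    rintro _ ⟨w, rfl⟩
    exact sub_mem (Submodule.mem_sup_left (Submodule.subset_span ⟨w, rfl⟩))
      (Submodule.mem_sup_right (Submodule.subset_span ⟨w, rfl⟩))
  exact (Submodule.rank_mono hle).trans (Submodule.rank_add_le_rank_add_rank S₁ S₂)

/-- The subspace `Z k` of the column space of `q` from the proof sketch above. -/
def hankelVanishBelow (q : List A → ℝ) (k : ℕ) : Submodule ℝ (List A → ℝ) :=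
  Submodule.span ℝ (Set.range (hankelCol q)) ⊓ vanishBelow A k

theorem hankelVanishBelow_antitone (q : List A → ℝ) : Antitone (hankelVanishBelow q) :=
  fun _ _ hjk => inf_le_inf_left _ (vanishBelow_antitone hjk)

theorem hankelVanishBelow_succ_succ (q : List A → ℝ) {k : ℕ}
    (hk : hankelVanishBelow q k = hankelVanishBelow q (k + 1)) :
    hankelVanishBelow q (k + 1) = hankelVanishBelow q (k + 2) := by
  refine le_antisymm ?_ (hankelVanishBelow_antitone q k.succ.le_succ)
  rintro f ⟨hfW, hfv⟩
  refine ⟨hfW, fun v hv => ?_⟩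
  match v with
  | [] => exact hfv [] (by simp)
  | a :: v =>
    have hshift : LinearMap.funLeft ℝ ℝ (List.cons a) f ∈ hankelVanishBelow q k :=
      ⟨funLeft_cons_mem_span_hankelCol a hfW,
        fun u hu => hfv (a :: u) (by simp only [List.length_cons]; omega)⟩
    rw [hk] at hshift
    exact hshift.2 v (by simp only [List.length_cons] at hv; omega)

theorem eq_zero_of_sfDim_le_of_vanishBelow {q : List A → ℝ} {n : ℕ}
    (hdim : sfDim q ≤ n) (hvan : ∀ v : List A, v.length < n → q v = 0) : q = 0 := by
  have : FiniteDimensional ℝ (Submodule.span ℝ (Set.range (hankelCol q))) :=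
    Module.rank_lt_aleph0_iff.1 (hdim.trans_lt (Cardinal.natCast_lt_aleph0))
  have : FiniteDimensional ℝ (hankelVanishBelow q 0) :=
    Submodule.finiteDimensional_of_le inf_le_left
  have hrank : Module.finrank ℝ (hankelVanishBelow q 0) ≤ n :=
    (Submodule.finrank_mono inf_le_left).trans (Module.finrank_le_of_rank_le hdim)
  obtain ⟨k, hkr, hk⟩ :=
    Submodule.exists_le_finrank_eq_succ_of_antitone (hankelVanishBelow_antitone q)
  have hqZ : q ∈ hankelVanishBelow q k :=
    hankelVanishBelow_antitone q (hkr.trans hrank) ⟨self_mem_span_hankelCol q, hvan⟩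
  funext v
  have hstable := eq_of_le_of_eq_succ (fun _ hk => hankelVanishBelow_succ_succ q hk) hk
    (k + v.length + 1) (by omega)
  rw [← hstable] at hqZ
  exact hqZ.2 v (by omega)

theorem eq_zero_of_length_le_of_sum_append [Fintype A] {q : List A → ℝ} {N : ℕ}
    (hq : ∀ v : List A, ∑ a : A, q (v ++ [a]) = q v)
    (hN : ∀ v : List A, v.length = N → q v = 0) :
    ∀ v : List A, v.length ≤ N → q v = 0 := by
  suffices ∀ m, ∀ v : List A, v.length + m = N → q v = 0 from
    fun v hv => this (N - v.length) v (by omega)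
  intro m
  induction m with
  | zero => exact hN
  | succ m ih =>
    intro v hv
    rw [← hq v]
    exact Finset.sum_eq_zero fun a _ =>
      ih _ (by rw [List.length_append, List.length_singleton]; omega)

end StringFunction

theorem stmt5_general {A : Type*} [Fintype A] (d : ℕ)
    (p₁ p₂ : List A → ℝ)
    (hg₁ : ∀ v : List A, ∑ a : A, p₁ (v ++ [a]) = p₁ v)
    (hg₂ : ∀ v : List A, ∑ a : A, p₂ (v ++ [a]) = p₂ v)
    (h₁ : sfDim p₁ ≤ (d : Cardinal)) (h₂ : sfDim p₂ ≤ (d : Cardinal))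
    (h : ∀ v : List A, v.length = 2 * d - 1 → p₁ v = p₂ v) :
    p₁ = p₂ := by
  have hsum : ∀ v : List A, ∑ a : A, (p₁ - p₂) (v ++ [a]) = (p₁ - p₂) v := fun v => by
    simp only [Pi.sub_apply, Finset.sum_sub_distrib, hg₁, hg₂]
  have hvan : ∀ v : List A, v.length < 2 * d → (p₁ - p₂) v = 0 := fun v hv =>
    StringFunction.eq_zero_of_length_le_of_sum_append hsum
      (fun v hv => sub_eq_zero.2 (h v hv)) v (by omega)
  have hdim : sfDim (p₁ - p₂) ≤ (2 * d : ℕ) := by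
    rw [two_mul, Nat.cast_add]
    exact (StringFunction.sfDim_sub_le p₁ p₂).trans (add_le_add h₁ h₂)
  exact sub_eq_zero.1 (StringFunction.eq_zero_of_sfDim_le_of_vanishBelow hdim hvan)

/-- Two GUSSFs of dimension `≤ d` (`d ≥ 1`) that agree on all strings of
length exactly `2d−1` are equal. -/
theorem stmt5 {A : Type*} [Fintype A] [Nonempty A] (d : ℕ) (hd : 1 ≤ d)
    (p₁ p₂ : List A → ℝ)
    (hg₁ : ∀ v : List A, ∑ a : A, p₁ (v ++ [a]) = p₁ v)
    (hg₂ : ∀ v : List A, ∑ a : A, p₂ (v ++ [a]) = p₂ v)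
    (h₁ : sfDim p₁ ≤ (d : Cardinal)) (h₂ : sfDim p₂ ≤ (d : Cardinal))
    (h : ∀ v : List A, v.length = 2 * d - 1 → p₁ v = p₂ v) :
    p₁ = p₂ :=
  stmt5_general d p₁ p₂ hg₁ hg₂ h₁ h₂ h
end

section
/- Let d ≥ 1 and n ≥ 2d, and let M_d denote the class of USSFs over Σ of dimension at most d. Then for any family (p(u))_{u∈Σ^{n+1}} of reals: there exists q ∈ M_d with q(u) = p(u) for all u ∈ Σ^{n+1} if and only if (i) for every a ∈ Σ there exists q_a ∈ M_d with q_a(v) = p(av) for all v ∈ Σ^n, and (ii) there exists q' ∈ M_d with q'(v) = Σ_{a∈Σ} p(va) for all v ∈ Σ^n. -/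
/-- The class `M_d` of unconstrained stochastic string functions of dimension at most `d`. -/
def Md {A : Type*} [Fintype A] (d : ℕ) : Set (List A → ℝ) :=
  {q | (∀ v : List A, 0 ≤ q v) ∧ (∀ v : List A, ∑ a : A, q (v ++ [a]) = q v) ∧
    sfDim q ≤ (d : Cardinal)}

section ShiftInvariant

variable {K A : Type*} [Field K]

def ShiftInvariant (V : Submodule K (List A → K)) : Prop :=
  ∀ a : A, ∀ f ∈ V, (fun v => f (a :: v)) ∈ V

theorem ShiftInvariant.sup {V W : Submodule K (List A → K)} (hV : ShiftInvariant V)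
    (hW : ShiftInvariant W) : ShiftInvariant (V ⊔ W) := by
  intro a f hf
  obtain ⟨g, hg, h, hh, rfl⟩ := Submodule.mem_sup.1 hf
  exact Submodule.mem_sup.2 ⟨_, hV a g hg, _, hW a h hh, rfl⟩

def vanishingBelow (V : Submodule K (List A → K)) (k : ℕ) : Submodule K (List A → K) where
  carrier := {f | f ∈ V ∧ ∀ u : List A, u.length < k → f u = 0}
  add_mem' := fun ⟨hf, hf0⟩ ⟨hg, hg0⟩ =>
    ⟨V.add_mem hf hg, fun u hu => by simp [hf0 u hu, hg0 u hu]⟩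
  zero_mem' := ⟨V.zero_mem, fun _ _ => rfl⟩
  smul_mem' := fun c _ ⟨hf, hf0⟩ => ⟨V.smul_mem c hf, fun u hu => by simp [hf0 u hu]⟩

variable {V : Submodule K (List A → K)}

theorem vanishingBelow_le (k : ℕ) : vanishingBelow V k ≤ V := fun _ hf => hf.1

theorem vanishingBelow_antitone : Antitone (vanishingBelow V) :=
  fun _ _ hkl _ ⟨hf, hf0⟩ => ⟨hf, fun u hu => hf0 u (hu.trans_le hkl)⟩

/-- `f` vanishes below `k + 2` iff `f [] = 0` and every shift `v ↦ f (a :: v)` vanishes below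
`k + 1`; hence once the chain stalls it stalls forever. -/
theorem ShiftInvariant.vanishingBelow_succ_le_succ_succ (hV : ShiftInvariant V) {k : ℕ}
    (h : vanishingBelow V k ≤ vanishingBelow V (k + 1)) :
    vanishingBelow V (k + 1) ≤ vanishingBelow V (k + 2) := by
  rintro f ⟨hf, hf0⟩
  refine ⟨hf, fun u hu => ?_⟩
  cases u with
  | nil => exact hf0 [] k.succ_pos
  | cons a u =>
    have hshift : (fun v => f (a :: v)) ∈ vanishingBelow V k :=
      ⟨hV a f hf, fun v hv => hf0 (a :: v) (by simpa using hv)⟩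
    exact (h hshift).2 u (by simpa using hu)

theorem ShiftInvariant.vanishingBelow_eq_bot_of_le_succ (hV : ShiftInvariant V) {k : ℕ}
    (h : vanishingBelow V k ≤ vanishingBelow V (k + 1)) : vanishingBelow V k = ⊥ := by
  have hmono : Monotone fun j => vanishingBelow V (k + j) := by
    refine monotone_nat_of_le_succ fun j => ?_
    induction j with
    | zero => exact h
    | succ j ih => exact hV.vanishingBelow_succ_le_succ_succ ih
  refine eq_bot_iff.2 fun f hf => (Submodule.mem_bot K).2 (funext fun u => ?_)
  exact (hmono (Nat.zero_le (u.length + 1)) hf).2 u (by omega)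

theorem ShiftInvariant.vanishingBelow_finrank_eq_bot (hV : ShiftInvariant V)
    [FiniteDimensional K V] : vanishingBelow V (Module.finrank K V) = ⊥ := by
  have (k : ℕ) : FiniteDimensional K (vanishingBelow V k) :=
    Submodule.finiteDimensional_of_le (vanishingBelow_le k)
  have key : ∀ k, vanishingBelow V k = ⊥ ∨
      Module.finrank K (vanishingBelow V k) + k ≤ Module.finrank K V := by
    intro k
    induction k with
    | zero => exact .inr (Submodule.finrank_mono (vanishingBelow_le 0))
    | succ k ih =>
      by_cases hbot : vanishingBelow V k = ⊥
      · exact .inl (le_bot_iff.1 (hbot ▸ vanishingBelow_antitone k.le_succ))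
      · have hlt := Submodule.finrank_lt_finrank_of_lt (lt_of_le_of_ne
          (vanishingBelow_antitone k.le_succ)
          fun heq => hbot (hV.vanishingBelow_eq_bot_of_le_succ heq.ge))
        exact .inr (by have := ih.resolve_left hbot; omega)
  rcases key (Module.finrank K V) with h | h
  · exact h
  · exact Submodule.finrank_eq_zero.1 (by omega)

theorem ShiftInvariant.eq_zero_of_forall_length_lt (hV : ShiftInvariant V) {r : ℕ}
    (hr : Module.rank K V ≤ r) {f : List A → K} (hf : f ∈ V)
    (hz : ∀ u : List A, u.length < r → f u = 0) : f = 0 := by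
  have : FiniteDimensional K V :=
    Module.rank_lt_aleph0_iff.1 (hr.trans_lt Cardinal.natCast_lt_aleph0)
  have hmem : f ∈ vanishingBelow V (Module.finrank K V) :=
    vanishingBelow_antitone (Module.finrank_le_of_rank_le hr) ⟨hf, hz⟩
  rwa [hV.vanishingBelow_finrank_eq_bot, Submodule.mem_bot] at hmem

end ShiftInvariant

theorem eq_zero_of_sum_concat_of_length_eq {A M : Type*} [Fintype A] [AddCommMonoid M]
    {f : List A → M} (hf : ∀ v, ∑ a, f (v ++ [a]) = f v) {n : ℕ}
    (h : ∀ v : List A, v.length = n → f v = 0) (v : List A) (hv : v.length ≤ n) :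
    f v = 0 := by
  obtain ⟨k, hk⟩ := Nat.exists_eq_add_of_le hv
  induction k generalizing v with
  | zero => exact h v hk.symm
  | succ k ih =>
    rw [← hf v]
    exact Finset.sum_eq_zero fun a _ => ih _ (by simp; omega) (by simp; omega)

section Hankel

variable {A : Type*}

def hankelSpan (p : List A → ℝ) : Submodule ℝ (List A → ℝ) :=
  Submodule.span ℝ (Set.range (hankelCol p))

theorem hankelCol_append (p : List A → ℝ) (w w' : List A) :
    hankelCol (hankelCol p w) w' = hankelCol p (w ++ w') := by
  funext v
  simp [hankelCol]

theorem hankelCol_mem_hankelSpan (p : List A → ℝ) (w : List A) :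
    hankelCol p w ∈ hankelSpan p :=
  Submodule.subset_span ⟨w, rfl⟩

theorem shiftInvariant_hankelSpan (p : List A → ℝ) : ShiftInvariant (hankelSpan p) := by
  intro a f hf
  refine Submodule.span_mono ?_
    (Submodule.apply_mem_span_image_of_mem_span (LinearMap.funLeft ℝ ℝ (List.cons a)) hf)
  rintro _ ⟨_, ⟨w, rfl⟩, rfl⟩
  exact ⟨w ++ [a], by funext v; simp [hankelCol, LinearMap.funLeft]⟩

theorem sfDim_hankelCol_le (p : List A → ℝ) (w : List A) :
    sfDim (hankelCol p w) ≤ sfDim p := by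
  refine Submodule.rank_mono (Submodule.span_le.2 ?_)
  rintro _ ⟨w', rfl⟩
  rw [hankelCol_append]
  exact hankelCol_mem_hankelSpan p _

theorem hankelCol_mem_Md [Fintype A] {d : ℕ} {q : List A → ℝ} (hq : q ∈ Md d) (w : List A) :
    hankelCol q w ∈ Md d := by
  obtain ⟨hpos, hsum, hdim⟩ := hq
  refine ⟨fun v => hpos _, fun v => ?_, (sfDim_hankelCol_le q w).trans hdim⟩
  simpa [hankelCol] using hsum (w ++ v)

theorem eq_of_forall_length_eq [Fintype A] {f g : List A → ℝ} {d₁ d₂ m : ℕ}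
    (hf : ∀ v, ∑ a, f (v ++ [a]) = f v) (hg : ∀ v, ∑ a, g (v ++ [a]) = g v)
    (hdf : sfDim f ≤ d₁) (hdg : sfDim g ≤ d₂) (hm : d₁ + d₂ ≤ m + 1)
    (h : ∀ v : List A, v.length = m → f v = g v) : f = g := by
  have hrank : Module.rank ℝ ↥(hankelSpan f ⊔ hankelSpan g) ≤ (m + 1 : ℕ) :=
    calc Module.rank ℝ ↥(hankelSpan f ⊔ hankelSpan g)
        ≤ sfDim f + sfDim g := Submodule.rank_add_le_rank_add_rank _ _
      _ ≤ d₁ + d₂ := add_le_add hdf hdg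
      _ ≤ (m + 1 : ℕ) := by exact_mod_cast hm
  have hmem : f - g ∈ hankelSpan f ⊔ hankelSpan g :=
    sub_mem (Submodule.mem_sup_left (hankelCol_mem_hankelSpan f []))
      (Submodule.mem_sup_right (hankelCol_mem_hankelSpan g []))
  have hsum : ∀ v, ∑ a, (f - g) (v ++ [a]) = (f - g) v := fun v => by
    simp [Finset.sum_sub_distrib, hf, hg]
  have hlow : ∀ v : List A, v.length < m + 1 → (f - g) v = 0 := fun v hv =>
    eq_zero_of_sum_concat_of_length_eq hsum (fun w hw => sub_eq_zero.2 (h w hw)) v (by omega)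
  exact sub_eq_zero.1 ((shiftInvariant_hankelSpan f).sup (shiftInvariant_hankelSpan g)
    |>.eq_zero_of_forall_length_lt hrank hmem hlow)

end Hankel

theorem stmt10_general {A : Type*} [Fintype A] (d n : ℕ)
    (hd : 1 ≤ d) (hn : 2 * d ≤ n) (p : List A → ℝ) :
    (∃ q ∈ Md (A := A) d, ∀ u : List A, u.length = n + 1 → q u = p u) ↔
      ((∀ a : A, ∃ q ∈ Md (A := A) d, ∀ v : List A, v.length = n → q v = p (a :: v)) ∧
        (∃ q' ∈ Md (A := A) d, ∀ v : List A, v.length = n → q' v = ∑ a : A, p (v ++ [a]))) := by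
  constructor
  · rintro ⟨q, hq, hqp⟩
    refine ⟨fun a => ⟨hankelCol q [a], hankelCol_mem_Md hq [a], fun v hv => hqp (a :: v)
      (by simp [hv])⟩, q, hq, fun v hv => ?_⟩
    rw [← hq.2.1 v]
    exact Finset.sum_congr rfl fun b _ => hqp _ (by simp [hv])
  · rintro ⟨hshift, q', hq', hq'p⟩
    choose qa hqa hqap using hshift
    obtain ⟨m, rfl⟩ : ∃ m, n = m + 1 := ⟨n - 1, by omega⟩
    have hcol : ∀ a, qa a = hankelCol q' [a] := fun a =>
      eq_of_forall_length_eq (m := m) (hqa a).2.1 (hankelCol_mem_Md hq' [a]).2.1 (hqa a).2.2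
        (hankelCol_mem_Md hq' [a]).2.2 (by omega) fun w hw =>
          calc qa a w = ∑ b, qa a (w ++ [b]) := ((hqa a).2.1 w).symm
            _ = ∑ b, p (a :: (w ++ [b])) :=
                Finset.sum_congr rfl fun b _ => hqap a _ (by simp [hw])
            _ = hankelCol q' [a] w := (hq'p (a :: w) (by simp [hw])).symm
    refine ⟨q', hq', fun u hu => ?_⟩
    obtain _ | ⟨a, v⟩ := u
    · simp at hu
    · rw [← hqap a v (by simpa using hu), hcol]
      rfl

/-- For `d ≥ 1` and `n ≥ 2d`: a family `(p(u))_{u ∈ Σ^{n+1}}` extends to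
a USSF of dimension `≤ d` iff each shifted family `(p(av))_{v ∈ Σⁿ}` and the marginal
family `(∑_a p(va))_{v ∈ Σⁿ}` do. -/
theorem stmt10 {A : Type*} [Fintype A] [Nonempty A] (d n : ℕ)
    (hd : 1 ≤ d) (hn : 2 * d ≤ n) (p : List A → ℝ) :
    (∃ q ∈ Md (A := A) d, ∀ u : List A, u.length = n + 1 → q u = p u) ↔
      ((∀ a : A, ∃ q ∈ Md (A := A) d, ∀ v : List A, v.length = n → q v = p (a :: v)) ∧
        (∃ q' ∈ Md (A := A) d, ∀ v : List A, v.length = n → q' v = ∑ a : A, p (v ++ [a]))) :=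
  stmt10_general d n hd hn p
end

section
/- (Heller, 1965) A string function p : Σ* → ℝ is associated with an unconstrained hidden Markov process on some finite number l of hidden states if and only if there exist finitely many USSFs p_1,…,p_l, each lying in the column space C_p := span{p^w : w ∈ Σ*} of the Hankel matrix of p, such that (a) p is a nonnegative linear combination of p_1,…,p_l, and (b) for every w ∈ Σ* and every i, the column (p_i)^w : v ↦ p_i(wv) is a nonnegative linear combination of p_1,…,p_l. -/
open Matrix

/-- For `v = a₁…aₙ`, the product `T_{aₙ} ⋯ T_{a₁}`. -/
def wordProd {A R : Type*} [Semiring R] {d : ℕ}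
    (T : A → Matrix (Fin d) (Fin d) R) (v : List A) : Matrix (Fin d) (Fin d) R :=
  (v.reverse.map T).prod

/-- `p` is associated with an unconstrained hidden Markov process on `l` hidden states:
there are a row-stochastic nonnegative transition matrix `Am`, emission probabilities `E`,
and a nonnegative initial vector `π` such that, with `T_a := Amᵀ · diag(E · a)`,
`p(a₁…aₙ) = 𝟙ᵀ T_{aₙ} ⋯ T_{a₁} π`. -/
def IsHMM {A : Type*} [Fintype A] (l : ℕ) (p : List A → ℝ) : Prop :=
  ∃ (Am : Matrix (Fin l) (Fin l) ℝ) (E : Fin l → A → ℝ) (π : Fin l → ℝ),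
    (∀ i j, 0 ≤ Am i j) ∧ (∀ i, ∑ j, Am i j = 1) ∧
    (∀ i a, 0 ≤ E i a) ∧ (∀ i, ∑ a : A, E i a = 1) ∧ (∀ i, 0 ≤ π i) ∧
    ∀ v : List A,
      p v = (fun _ => (1 : ℝ)) ⬝ᵥ
        (wordProd (fun a => Amᵀ * Matrix.diagonal fun i => E i a) v) *ᵥ π

/-!
If `p(v) = 𝟙ᵀ T_v π` for an HMM, let `K` be the cone of those `x ≥ 0` whose string function
`v ↦ 𝟙ᵀ T_v x` lies in the Hankel column space `C_p`. It is the nonnegative part of a linear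
subspace, hence finitely generated, and the string functions `pᵢ` of its generators are USSFs in
`C_p`. Since `π ∈ K` and `K` is stable under every `T_w` (because `C_p` is stable under shifts),
`p` and every column `pᵢ^w` are nonnegative combinations of the `pᵢ`.

Conversely, given such `pᵢ` with `pᵢ^a = ∑ⱼ d_{aij} pⱼ`, run a chain on the states `(i, a)`:
state `(i, a)` emits `a` and moves to `(j, b)` with probability `d_{aij} pⱼ(b) / pᵢ(a)`.
By induction on `v`, `∑ₐ pᵢ(a) · Pr[(i, a) emits v] = pᵢ(v)`, so the initial weights `cᵢ pᵢ(a)`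
reproduce `p = ∑ᵢ cᵢ pᵢ`.
-/

open Finset

namespace PointedCone

section Hull

variable {R E ι : Type*} [Semiring R] [PartialOrder R] [IsOrderedRing R]
  [AddCommMonoid E] [Module R E] [Fintype ι]

lemma mem_hull_range_iff {v : ι → E} {x : E} :
    x ∈ hull R (Set.range v) ↔ ∃ c : ι → R, (∀ i, 0 ≤ c i) ∧ ∑ i, c i • v i = x := by
  rw [Submodule.mem_span_range_iff_exists_fun]
  constructor
  · rintro ⟨c, rfl⟩
    exact ⟨fun i => c i, fun i => (c i).2, rfl⟩
  · rintro ⟨c, hc, rfl⟩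
    exact ⟨fun i => ⟨c i, hc i⟩, rfl⟩

end Hull

section Positive

variable {𝕜 ι : Type*} [Field 𝕜] [LinearOrder 𝕜] [IsStrictOrderedRing 𝕜] [Fintype ι]

lemma exists_sub_smul_nonneg_eq_zero {x y : ι → 𝕜} (hx : 0 ≤ x) (hy : 0 ≤ y)
    (hxy : ∀ i, x i = 0 ↔ y i = 0) {i₁ : ι} (hi₁ : x i₁ ≠ 0) :
    ∃ t : 𝕜, 0 ≤ t ∧ 0 ≤ x - t • y ∧ ∃ i, x i ≠ 0 ∧ (x - t • y) i = 0 := by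
  classical
  have hy_pos (i) (hi : x i ≠ 0) : 0 < y i := (hy i).lt_of_ne' (mt (hxy i).mpr hi)
  obtain ⟨i₀, hi₀, hmin⟩ := (univ.filter (x · ≠ 0)).exists_min_image (fun i => x i / y i)
    ⟨i₁, by simpa using hi₁⟩
  rw [mem_filter] at hi₀
  refine ⟨x i₀ / y i₀, div_nonneg (hx i₀) (hy i₀), fun i => ?_, i₀, hi₀.2, ?_⟩
  · by_cases hi : x i = 0
    · simp [hi, (hxy i).mp hi]
    · exact sub_nonneg.mpr ((le_div_iff₀ (hy_pos i hi)).mp (hmin i (by simpa using hi)))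
  · simp [(hy_pos i₀ hi₀.2).ne']

/- Each element of the cone is peeled down by `exists_sub_smul_nonneg_eq_zero`, using a fixed
element of the cone with the same support; so one chosen element per occurring support
generates the cone. -/
theorem fg_positive_inf_submodule (V : Submodule 𝕜 (ι → 𝕜)) :
    (positive 𝕜 (ι → 𝕜) ⊓ V).FG := by
  classical
  set K := positive 𝕜 (ι → 𝕜) ⊓ V
  let supp : (ι → 𝕜) → Finset ι := fun x => univ.filter (x · ≠ 0)
  have mem_supp (z : ι → 𝕜) (i : ι) : i ∈ supp z ↔ z i ≠ 0 := by simp [supp]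
  let g : Finset ι → ι → 𝕜 := fun S => if h : ∃ y ∈ K, supp y = S then h.choose else 0
  have hg (S : Finset ι) : g S ∈ K := by
    by_cases h : ∃ y ∈ K, supp y = S
    · simpa [g, h] using h.choose_spec.1
    · simp [g, h]
  suffices hK : K = hull 𝕜 (Set.range g) from hK ▸ Submodule.fg_span (Set.finite_range g)
  refine le_antisymm (fun x hx => ?_) (Submodule.span_le.mpr (Set.range_subset_iff.mpr hg))
  induction hS : supp x using Finset.strongInduction generalizing x with
  | H S ih =>
  have hSK : ∃ y ∈ K, supp y = S := ⟨x, hx, hS⟩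
  obtain ⟨hx0, hxV⟩ : 0 ≤ x ∧ x ∈ V := hx
  obtain rfl | ⟨i₁, hi₁⟩ := S.eq_empty_or_nonempty
  · have : x = 0 := funext fun i => by simpa [← hS, mem_supp] using notMem_empty i
    exact this ▸ zero_mem _
  obtain ⟨⟨hy0, hyV⟩, hyS⟩ : g S ∈ K ∧ supp (g S) = S := by simpa [g, hSK] using hSK.choose_spec
  have hxy (i : ι) : x i = 0 ↔ g S i = 0 :=
    not_iff_not.mp (by simpa [mem_supp] using congrArg (i ∈ ·) (hS.trans hyS.symm))
  obtain ⟨t, ht, hx't, i₀, hi₀, hx'i₀⟩ :=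
    exists_sub_smul_nonneg_eq_zero hx0 hy0 hxy ((mem_supp x i₁).mp (hS ▸ hi₁))
  have hx'S : supp (x - t • g S) ⊂ S := by
    refine (ssubset_iff_of_subset fun i hi => ?_).mpr ⟨i₀, hS ▸ (mem_supp x i₀).mpr hi₀, ?_⟩
    · by_contra hiS
      have hxi : x i = 0 := by simpa [← hS, mem_supp] using hiS
      exact (mem_supp _ i).mp hi (by simp [hxi, (hxy i).mp hxi])
    · simpa [mem_supp] using hx'i₀
  have hty : t • g S ∈ hull 𝕜 (Set.range g) :=
    Nonneg.mk_smul t ht (g S) ▸ Submodule.smul_mem _ _ (subset_hull ⟨S, rfl⟩)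
  simpa using add_mem (ih _ hx'S _ ⟨hx't, (sub_mem hxV (V.smul_mem t hyV) : _ ∈ V)⟩ rfl) hty

end Positive

end PointedCone

section WordProd

variable {A R : Type*} [Semiring R] {d : ℕ} (T : A → Matrix (Fin d) (Fin d) R)

@[simp]
lemma wordProd_nil : wordProd T [] = 1 := rfl

lemma wordProd_append (w v : List A) : wordProd T (w ++ v) = wordProd T v * wordProd T w := by
  simp [wordProd]

lemma wordProd_cons (a : A) (v : List A) : wordProd T (a :: v) = wordProd T v * T a := by
  simp [wordProd]

lemma wordProd_concat (v : List A) (a : A) : wordProd T (v ++ [a]) = T a * wordProd T v := by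
  simp [wordProd]

end WordProd

lemma Matrix.mulVec_nonneg {m n R : Type*} [Fintype n] [Semiring R] [PartialOrder R]
    [IsOrderedRing R] {M : Matrix m n R} (hM : ∀ i j, 0 ≤ M i j) {x : n → R} (hx : 0 ≤ x) :
    0 ≤ M *ᵥ x :=
  fun i => dotProduct_nonneg_of_nonneg (fun j => hM i j) hx

section OutputMap

variable {A : Type*} {d : ℕ} (T : A → Matrix (Fin d) (Fin d) ℝ)

lemma wordProd_mulVec_nonneg (hT : ∀ a i j, 0 ≤ T a i j) (v : List A) {x : Fin d → ℝ}
    (hx : 0 ≤ x) : 0 ≤ wordProd T v *ᵥ x := by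
  induction v using List.reverseRecOn with
  | nil => simpa using hx
  | append_singleton v a ih =>
    rw [wordProd_concat, ← mulVec_mulVec]
    exact mulVec_nonneg (hT a) ih

def outputMap : (Fin d → ℝ) →ₗ[ℝ] (List A → ℝ) where
  toFun x v := 1 ⬝ᵥ (wordProd T v *ᵥ x)
  map_add' x y := by ext v; simp [mulVec_add]
  map_smul' c x := by ext v; simp [mulVec_smul]

lemma outputMap_apply (x : Fin d → ℝ) (v : List A) :
    outputMap T x v = 1 ⬝ᵥ (wordProd T v *ᵥ x) := rfl

lemma outputMap_append (x : Fin d → ℝ) (w v : List A) :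
    outputMap T x (w ++ v) = outputMap T (wordProd T w *ᵥ x) v := by
  simp [outputMap_apply, wordProd_append, mulVec_mulVec]

lemma outputMap_nonneg (hT : ∀ a i j, 0 ≤ T a i j) {x : Fin d → ℝ} (hx : 0 ≤ x) (v : List A) :
    0 ≤ outputMap T x v :=
  dotProduct_nonneg_of_nonneg zero_le_one (wordProd_mulVec_nonneg T hT v hx)

lemma outputMap_sum_concat [Fintype A] (hT : 1 ᵥ* ∑ a, T a = 1) (x : Fin d → ℝ) (v : List A) :
    ∑ a, outputMap T x (v ++ [a]) = outputMap T x v := by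
  simp only [outputMap_apply, wordProd_concat, ← mulVec_mulVec, dotProduct_mulVec 1 (T _)]
  rw [← sum_dotProduct, ← vecMul_sum, hT]

end OutputMap

section USSF

variable {A : Type*} [Fintype A]

def IsUSSF (q : List A → ℝ) : Prop :=
  (∀ v, 0 ≤ q v) ∧ ∀ v, ∑ a, q (v ++ [a]) = q v

lemma IsUSSF.apply_append_eq_zero {q : List A → ℝ} (hq : IsUSSF q) {w : List A} (hw : q w = 0)
    (u : List A) : q (w ++ u) = 0 := by
  induction u generalizing w with
  | nil => simpa using hw
  | cons a u ih =>
    have hwa : q (w ++ [a]) = 0 :=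
      (sum_eq_zero_iff_of_nonneg fun b _ => hq.1 _).mp ((hq.2 w).trans hw) a (mem_univ a)
    simpa using ih hwa

lemma IsUSSF.sum_singleton {q : List A → ℝ} (hq : IsUSSF q) : ∑ a, q [a] = q [] :=
  hq.2 []

end USSF

lemma span_range_hankelCol_le_comap_funLeft {A : Type*} (p : List A → ℝ) (w : List A) :
    Submodule.span ℝ (Set.range (hankelCol p)) ≤
      (Submodule.span ℝ (Set.range (hankelCol p))).comap (LinearMap.funLeft ℝ ℝ (w ++ ·)) :=
  Submodule.span_le.mpr <| Set.range_subset_iff.mpr fun u =>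
    Submodule.subset_span ⟨u ++ w, funext fun v => by simp [hankelCol, LinearMap.funLeft]⟩

theorem exists_ussf_family_of_outputMap {A : Type*} [Fintype A] {d : ℕ}
    (T : A → Matrix (Fin d) (Fin d) ℝ) (hT : ∀ a i j, 0 ≤ T a i j) (hT1 : 1 ᵥ* ∑ a, T a = 1)
    (C : Submodule ℝ (List A → ℝ)) (hC : ∀ w, C ≤ C.comap (LinearMap.funLeft ℝ ℝ (w ++ ·)))
    {π : Fin d → ℝ} (hπ : 0 ≤ π) {p : List A → ℝ} (hp : outputMap T π = p) (hpC : p ∈ C) :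
    ∃ (l : ℕ) (q : Fin l → List A → ℝ), (∀ i, IsUSSF (q i)) ∧ (∀ i, q i ∈ C) ∧
      (∃ c : Fin l → ℝ, (∀ i, 0 ≤ c i) ∧ ∀ v, p v = ∑ i, c i * q i v) ∧
      ∀ (w : List A) (i : Fin l), ∃ c : Fin l → ℝ, (∀ j, 0 ≤ c j) ∧
        ∀ v, q i (w ++ v) = ∑ j, c j * q j v := by
  obtain ⟨l, g, hg⟩ := Submodule.fg_iff_exists_fin_generating_family.mp
    (PointedCone.fg_positive_inf_submodule (C.comap (outputMap T)))
  have hK (x : Fin d → ℝ) : x ∈ PointedCone.hull ℝ (Set.range g) ↔ 0 ≤ x ∧ outputMap T x ∈ C :=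
    SetLike.ext_iff.mp hg x
  have hgK (k : Fin l) : 0 ≤ g k ∧ outputMap T (g k) ∈ C :=
    (hK _).mp (Submodule.subset_span ⟨k, rfl⟩)
  have hcomb (x : Fin d → ℝ) (hx : 0 ≤ x) (hxC : outputMap T x ∈ C) :
      ∃ c : Fin l → ℝ, (∀ j, 0 ≤ c j) ∧ ∀ v, outputMap T x v = ∑ j, c j * outputMap T (g j) v := by
    obtain ⟨c, hc, rfl⟩ := PointedCone.mem_hull_range_iff.mp ((hK x).mpr ⟨hx, hxC⟩)
    exact ⟨c, hc, fun v => by simp [Finset.sum_apply]⟩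
  refine ⟨l, fun k => outputMap T (g k),
    fun k => ⟨outputMap_nonneg T hT (hgK k).1, outputMap_sum_concat T hT1 _⟩,
    fun k => (hgK k).2, hp ▸ hcomb π hπ (hp ▸ hpC), fun w k => ?_⟩
  have hshift : outputMap T (wordProd T w *ᵥ g k) =
      LinearMap.funLeft ℝ ℝ (w ++ ·) (outputMap T (g k)) :=
    funext fun v => (outputMap_append T _ w v).symm
  simpa only [outputMap_append] using
    hcomb _ (wordProd_mulVec_nonneg T hT w (hgK k).1) (hshift ▸ hC w (hgK k).2)

theorem IsHMM.exists_ussf_family {A : Type*} [Fintype A] {l : ℕ} {p : List A → ℝ}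
    (h : IsHMM l p) :
    ∃ (m : ℕ) (q : Fin m → List A → ℝ), (∀ i, IsUSSF (q i)) ∧
      (∀ i, q i ∈ Submodule.span ℝ (Set.range (hankelCol p))) ∧
      (∃ c : Fin m → ℝ, (∀ i, 0 ≤ c i) ∧ ∀ v, p v = ∑ i, c i * q i v) ∧
      ∀ (w : List A) (i : Fin m), ∃ c : Fin m → ℝ, (∀ j, 0 ≤ c j) ∧
        ∀ v, q i (w ++ v) = ∑ j, c j * q j v := by
  obtain ⟨Am, E, π, hAm, hAm1, hE, hE1, hπ, hp⟩ := h
  refine exists_ussf_family_of_outputMap (fun a => Amᵀ * diagonal fun i => E i a)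
    (fun a i j => ?_) ?_ _ (span_range_hankelCol_le_comap_funLeft p) hπ (funext fun v => (hp v).symm)
    (Submodule.subset_span ⟨[], rfl⟩)
  · simpa [mul_diagonal] using mul_nonneg (hAm j i) (hE j a)
  · ext j
    simp [vecMul, dotProduct, Matrix.sum_apply, mul_diagonal, ← Finset.mul_sum, hE1, hAm1]

section EmitProb

variable {A S : Type*} [Fintype A] [Fintype S]

def emitProb (P : S → S → ℝ) (E : S → A → ℝ) : List A → S → ℝ
  | [], _ => 1
  | a :: v, s => E s a * ∑ t, P s t * emitProb P E v t

theorem isHMM_of_emitProb (P : S → S → ℝ) (E : S → A → ℝ) (π : S → ℝ)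
    (hP : ∀ s t, 0 ≤ P s t) (hP1 : ∀ s, ∑ t, P s t = 1) (hE : ∀ s a, 0 ≤ E s a)
    (hE1 : ∀ s, ∑ a, E s a = 1) (hπ : ∀ s, 0 ≤ π s) {p : List A → ℝ}
    (hp : ∀ v, p v = ∑ s, emitProb P E v s * π s) :
    IsHMM (Fintype.card S) p := by
  set e := (Fintype.equivFin S).symm
  refine ⟨fun i j => P (e i) (e j), fun i a => E (e i) a, fun i => π (e i), fun i j => hP _ _,
    fun i => (e.sum_comp (P (e i))).trans (hP1 _), fun i a => hE _ _, fun i => hE1 _,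
    fun i => hπ _, fun v => ?_⟩
  have key : ∀ v, 1 ᵥ* wordProd (fun a => (Matrix.of fun i j => P (e i) (e j))ᵀ *
      diagonal fun i => E (e i) a) v = fun i => emitProb P E v (e i) := by
    intro v
    induction v with
    | nil => exact vecMul_one 1
    | cons a v ih =>
      ext i
      rw [wordProd_cons, ← vecMul_vecMul, ih, ← vecMul_vecMul, vecMul_diagonal, vecMul_transpose,
        emitProb, ← e.sum_comp]
      simp [mulVec, dotProduct, mul_comm]
  rw [hp, dotProduct_mulVec]
  exact (e.sum_comp _).symm.trans (congrArg (· ⬝ᵥ fun i => π (e i)) (key v)).symm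

end EmitProb

theorem isHMM_of_ussf_family {A : Type*} [Fintype A] {l : ℕ} {p : List A → ℝ}
    {q : Fin l → List A → ℝ} (hq : ∀ i, IsUSSF (q i)) {c : Fin l → ℝ} (hc : ∀ i, 0 ≤ c i)
    (hp : ∀ v, p v = ∑ i, c i * q i v)
    (hshift : ∀ (w : List A) (i : Fin l), ∃ d : Fin l → ℝ, (∀ j, 0 ≤ d j) ∧
      ∀ v, q i (w ++ v) = ∑ j, d j * q j v) :
    IsHMM (l * Fintype.card A) p := by
  classical
  choose d hd hdq using fun (a : A) i => hshift [a] i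
  -- A row with `q i [a] = 0` carries no weight, so any stochastic row does there.
  let P : Fin l × A → Fin l × A → ℝ := fun s t =>
    if q s.1 [s.2] = 0 then if t = s then 1 else 0 else d s.2 s.1 t.1 * q t.1 [t.2] / q s.1 [s.2]
  let E : Fin l × A → A → ℝ := fun s a => if a = s.2 then 1 else 0
  have hP_sum (i : Fin l) (a : A) (h : q i [a] ≠ 0) (f : Fin l × A → ℝ) :
      q i [a] * ∑ t, P (i, a) t * f t = ∑ j, d a i j * ∑ b, q j [b] * f (j, b) := by
    simp only [P, if_neg h, Fintype.sum_prod_type, mul_sum]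
    refine sum_congr rfl fun j _ => sum_congr rfl fun b _ => ?_
    field_simp
  have hP0 (s t : Fin l × A) : 0 ≤ P s t := by
    simp only [P]
    split_ifs
    · exact zero_le_one
    · exact le_rfl
    · exact div_nonneg (mul_nonneg (hd _ _ _) ((hq _).1 _)) ((hq _).1 _)
  have hP1 : ∀ s, ∑ t, P s t = 1 := by
    rintro ⟨i, a⟩
    by_cases h : q i [a] = 0
    · simp [P, h]
    · have h1 := hP_sum i a h fun _ => 1
      simp only [mul_one, fun j => (hq j).sum_singleton, ← hdq a i [], List.append_nil] at h1
      exact mul_left_cancel₀ h (h1.trans (mul_one _).symm)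
  have key (v : List A) (i : Fin l) : ∑ a, q i [a] * emitProb P E v (i, a) = q i v := by
    induction v generalizing i with
    | nil => simpa [emitProb] using (hq i).sum_singleton
    | cons b v ih =>
      have hE (a : A) : E (i, a) b = if b = a then 1 else 0 := rfl
      simp only [emitProb, hE, ite_mul, one_mul, zero_mul, mul_ite, mul_zero, sum_ite_eq, mem_univ,
        if_true]
      by_cases h : q i [b] = 0
      · rw [h, zero_mul]
        exact ((hq i).apply_append_eq_zero h v).symm
      · rw [hP_sum i b h]
        simp only [ih]
        exact (hdq b i v).symm
  simpa using isHMM_of_emitProb P E (fun s => c s.1 * q s.1 [s.2]) hP0 hP1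
    (fun s a => by simp only [E]; positivity) (fun s => by simp [E])
    (fun s => mul_nonneg (hc _) ((hq _).1 _)) fun v => by
      simp only [hp, ← key v, mul_sum, Fintype.sum_prod_type]
      exact sum_congr rfl fun i _ => sum_congr rfl fun a _ => by ring

theorem stmt11_general {A : Type*} [Fintype A] (p : List A → ℝ) :
    (∃ l : ℕ, IsHMM l p) ↔
      ∃ (l : ℕ) (q : Fin l → (List A → ℝ)),
        (∀ i, (∀ v : List A, 0 ≤ q i v) ∧
          ∀ v : List A, ∑ a : A, q i (v ++ [a]) = q i v) ∧
        (∀ i, q i ∈ Submodule.span ℝ (Set.range (hankelCol p))) ∧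
        (∃ c : Fin l → ℝ, (∀ i, 0 ≤ c i) ∧ ∀ v : List A, p v = ∑ i, c i * q i v) ∧
        (∀ (w : List A) (i : Fin l), ∃ c : Fin l → ℝ, (∀ j, 0 ≤ c j) ∧
          ∀ v : List A, q i (w ++ v) = ∑ j, c j * q j v) := by
  constructor
  · rintro ⟨l, h⟩
    exact h.exists_ussf_family
  · rintro ⟨l, q, hq, -, ⟨c, hc, hp⟩, hshift⟩
    exact ⟨_, isHMM_of_ussf_family hq hc hp hshift⟩

/-- **Heller, 1965.** `p` is associated with an unconstrained hidden Markov
process on some finite number of hidden states iff there exist finitely many USSFs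
`p₁,…,p_l` in the column space of the Hankel matrix of `p` such that (a) `p` is a
nonnegative combination of the `pᵢ`, and (b) each column `(pᵢ)^w` is a nonnegative
combination of the `pᵢ`. -/
theorem stmt11 {A : Type*} [Fintype A] [Nonempty A] (p : List A → ℝ) :
    (∃ l : ℕ, IsHMM l p) ↔
      ∃ (l : ℕ) (q : Fin l → (List A → ℝ)),
        (∀ i, (∀ v : List A, 0 ≤ q i v) ∧
          ∀ v : List A, ∑ a : A, q i (v ++ [a]) = q i v) ∧
        (∀ i, q i ∈ Submodule.span ℝ (Set.range (hankelCol p))) ∧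
        (∃ c : Fin l → ℝ, (∀ i, 0 ≤ c i) ∧ ∀ v : List A, p v = ∑ i, c i * q i v) ∧
        (∀ (w : List A) (i : Fin l), ∃ c : Fin l → ℝ, (∀ j, 0 ≤ c j) ∧
          ∀ v : List A, q i (w ++ v) = ∑ j, c j * q j v) :=
  stmt11_general p
end
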